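/- arXiv:1401.1536 — 4 statements merged into one kernel-verified Lean document; each statement's English description precedes it below -/
import Mathlib

section
/- Let ξ, η be nonzero reals, λ₁ = ξ + η, λ₂ = ξ - η with λ₁, λ₂ ≠ 0, and set F = 4ξη(x + 4(ξ²+η²)t), G = 2(ξ²+η²)x + 4(ξ⁴+6ξ²η²+η⁴)t, f_j = e^{2λ_j²(x+2λ_j²t)i}. Then -2i(λ₁²-λ₂²)(λ₁f₁ - λ₂f₂)/(λ₂f₁ - λ₁f₂)² = -4iξη (η cos F + iξ sin F)³ / (ξ² + (η²-ξ²)cos²F)² · e^{-iG}, at all points where the denominators are nonzero. -/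
open Complex

/-- With `ξ, η` nonzero reals, `λ₁ = ξ+η`, `λ₂ = ξ-η` both nonzero,
`F = 4ξη(x + 4(ξ²+η²)t)`, `G = 2(ξ²+η²)x + 4(ξ⁴+6ξ²η²+η⁴)t` and
`f_j = e^{2λ_j²(x+2λ_j²t)i}`, the identity
`-2i(λ₁²-λ₂²)(λ₁f₁ - λ₂f₂)/(λ₂f₁ - λ₁f₂)²
   = -4iξη (η cos F + iξ sin F)³ / (ξ² + (η²-ξ²)cos²F)² · e^{-iG}`
holds at all points where the denominators are nonzero. -/
theorem stmt9 (ξ η : ℝ) (hξ : ξ ≠ 0) (hη : η ≠ 0)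
    (l1 l2 : ℝ) (hl1 : l1 = ξ + η) (hl2 : l2 = ξ - η) (h1 : l1 ≠ 0) (h2 : l2 ≠ 0)
    (f1 f2 : ℝ → ℝ → ℂ)
    (hf1 : ∀ x t : ℝ, f1 x t =
      Complex.exp (2 * (l1 : ℂ)^2 * ((x : ℂ) + 2 * (l1 : ℂ)^2 * (t : ℂ)) * I))
    (hf2 : ∀ x t : ℝ, f2 x t =
      Complex.exp (2 * (l2 : ℂ)^2 * ((x : ℂ) + 2 * (l2 : ℂ)^2 * (t : ℂ)) * I)) :
    ∀ x t : ℝ,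
      ((l2 : ℂ) * f1 x t - (l1 : ℂ) * f2 x t ≠ 0) →
      (ξ^2 + (η^2 - ξ^2) * (Real.cos (4*ξ*η*(x + 4*(ξ^2+η^2)*t)))^2 ≠ 0) →
      -2 * I * ((l1 : ℂ)^2 - (l2 : ℂ)^2) * ((l1 : ℂ) * f1 x t - (l2 : ℂ) * f2 x t)
          / ((l2 : ℂ) * f1 x t - (l1 : ℂ) * f2 x t)^2
        = -4 * I * (ξ : ℂ) * (η : ℂ) *
            ((η : ℂ) * Real.cos (4*ξ*η*(x + 4*(ξ^2+η^2)*t))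
              + I * (ξ : ℂ) * Real.sin (4*ξ*η*(x + 4*(ξ^2+η^2)*t)))^3
          / (((ξ : ℂ)^2 + ((η : ℂ)^2 - (ξ : ℂ)^2) *
              ((Real.cos (4*ξ*η*(x + 4*(ξ^2+η^2)*t)) : ℂ))^2)^2)
          * Complex.exp (-I * ((2*(ξ^2+η^2)*x + 4*(ξ^4+6*ξ^2*η^2+η^4)*t : ℝ) : ℂ)) := by
  intro x t h hD
  subst hl1 hl2
  set Fr : ℝ := 4*ξ*η*(x + 4*(ξ^2+η^2)*t) with hFrdef
  set Gr : ℝ := 2*(ξ^2+η^2)*x + 4*(ξ^4+6*ξ^2*η^2+η^4)*t with hGrdef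
  set c : ℂ := ((Real.cos Fr : ℝ) : ℂ) with hcdef
  set s : ℂ := ((Real.sin Fr : ℝ) : ℂ) with hsdef
  set E : ℂ := Complex.exp ((Gr : ℂ) * I) with hEdef
  have pyth : c ^ 2 + s ^ 2 = 1 := by
    rw [hcdef, hsdef]; norm_cast; rw [add_comm]; exact Real.sin_sq_add_cos_sq Fr
  have hE0 : E ≠ 0 := Complex.exp_ne_zero _
  have hexpF : Complex.exp ((Fr : ℂ) * I) = c + s * I := by
    rw [Complex.exp_mul_I, hcdef, hsdef, Complex.ofReal_cos, Complex.ofReal_sin]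
  have hexpF' : Complex.exp (-((Fr : ℂ) * I)) = c - s * I := by
    have harg : -((Fr : ℂ) * I) = (((-Fr : ℝ)) : ℂ) * I := by push_cast; ring
    rw [harg, Complex.exp_mul_I, Complex.ofReal_neg, Complex.cos_neg, Complex.sin_neg,
      hcdef, hsdef, Complex.ofReal_cos, Complex.ofReal_sin]
    ring
  have hf1x : f1 x t = E * (c + s * I) := by
    rw [hf1]
    have harg : 2 * (((ξ+η : ℝ)) : ℂ)^2 * ((x : ℂ) + 2 * (((ξ+η : ℝ)) : ℂ)^2 * (t : ℂ)) * I
        = (Gr : ℂ) * I + (Fr : ℂ) * I := by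
      rw [hGrdef, hFrdef]; push_cast; ring
    rw [harg, Complex.exp_add, hexpF, ← hEdef]
  have hf2x : f2 x t = E * (c - s * I) := by
    rw [hf2]
    have harg : 2 * (((ξ-η : ℝ)) : ℂ)^2 * ((x : ℂ) + 2 * (((ξ-η : ℝ)) : ℂ)^2 * (t : ℂ)) * I
        = (Gr : ℂ) * I + -((Fr : ℂ) * I) := by
      rw [hGrdef, hFrdef]; push_cast; ring
    rw [harg, Complex.exp_add, hexpF', ← hEdef]
  have hEinv : Complex.exp (-I * (Gr : ℂ)) = E⁻¹ := by
    rw [hEdef, ← Complex.exp_neg]; ring_nf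
  have hD' : (ξ : ℂ)^2 + ((η : ℂ)^2 - (ξ : ℂ)^2) * c^2 ≠ 0 := by
    rw [hcdef]
    intro hc
    apply hD
    exact_mod_cast hc
  have hfac : (ξ : ℂ)^2 + ((η : ℂ)^2 - (ξ : ℂ)^2) * c^2
      = ((η : ℂ) * c + I * (ξ : ℂ) * s) * ((η : ℂ) * c - I * (ξ : ℂ) * s) := by
    linear_combination (-(ξ:ℂ)^2) * pyth + (ξ:ℂ)^2 * s^2 * Complex.I_sq
  rw [hfac] at hD'
  obtain ⟨hA, hB⟩ := mul_ne_zero_iff.mp hD'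
  have hnum : (((ξ+η : ℝ)) : ℂ) * f1 x t - (((ξ-η : ℝ)) : ℂ) * f2 x t
      = 2 * E * ((η : ℂ) * c + I * (ξ : ℂ) * s) := by
    rw [hf1x, hf2x]; push_cast; ring
  have hden : (((ξ-η : ℝ)) : ℂ) * f1 x t - (((ξ+η : ℝ)) : ℂ) * f2 x t
      = -2 * E * ((η : ℂ) * c - I * (ξ : ℂ) * s) := by
    rw [hf1x, hf2x]; push_cast; ring
  rw [hnum, hden, hEinv, hfac]
  push_cast
  field_simp
  ring
end

section
/- For real ξ, η with ξη ≠ 0, the function q(x,t) = -4iξη (η cos F + iξ sin F)³ / (ξ² + (η²-ξ²) cos² F)² · e^{-iG}, with F = 4ξη(x + 4(ξ²+η²)t) and G = 2(ξ²+η²)x + 4(ξ⁴+6ξ²η²+η⁴)t, satisfies the DNLS equation i q_t + q_xx = i(|q|²q)_x on the open set where ξ² + (η²-ξ²)cos²F ≠ 0. -/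
/-!
Write `q = A(θ) e^{-iφ}` with `θ = a x + 2ac t`, `φ = c x + (c² + a²) t`, where `a = 4ξη` and
`c = 2(ξ² + η²)`. For modulated waves with these speeds the first-order terms cancel and DNLS
reduces to the profile equation `a² (A'' + A) = i a (|A|²A)' + c |A|²A`.

With `N = η cos θ + iξ sin θ` and `M = conj N` one has `ξ² + (η² - ξ²) cos² θ = N M`, hence
`A = -4iξη N / M²` and `|A|²A = 16 ξ²η² (-4iξη) / M³`. As `N'' = -N` and `M'' = -M`, the profile
equation becomes polynomial in `N, M, N', M'` and follows from `N'M' + NM = ξ² + η²`,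
`M² + M'² = η² - ξ²` and `(η² - ξ²) N = (ξ² + η²) M - 2iξη M'`.
-/

open Complex

noncomputable def pdx (g : ℝ → ℝ → ℂ) (x t : ℝ) : ℂ := deriv (fun y => g y t) x

noncomputable def pdt (g : ℝ → ℝ → ℂ) (x t : ℝ) : ℂ := deriv (fun s => g x s) t

open ComplexConjugate Topology

theorem HasDerivAt.mul_cexp_neg_I_mul {A : ℝ → ℂ} {θ φ : ℝ → ℝ} {A' : ℂ} {θ' φ' y : ℝ}
    (hA : HasDerivAt A A' (θ y)) (hθ : HasDerivAt θ θ' y) (hφ : HasDerivAt φ φ' y) :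
    HasDerivAt (fun z => A (θ z) * Complex.exp (-I * (φ z : ℂ)))
      (((θ' : ℂ) * A' - I * (φ' : ℂ) * A (θ y)) * Complex.exp (-I * (φ y : ℂ))) y := by
  refine ((hA.scomp y hθ).mul (hφ.ofReal_comp.const_mul (-I)).cexp).congr_deriv ?_
  rw [real_smul, Function.comp_apply]
  ring

theorem dnls_of_modulated_wave {A A' : ℝ → ℂ} {A'' B' : ℂ} {a c x t : ℝ}
    (hA : ∀ᶠ θ in 𝓝 (a * x + 2 * a * c * t), HasDerivAt A (A' θ) θ)
    (hA' : HasDerivAt A' A'' (a * x + 2 * a * c * t))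
    (hB : HasDerivAt (fun θ => A θ * conj (A θ) * A θ) B' (a * x + 2 * a * c * t))
    (hode : (a : ℂ) ^ 2 * (A'' + A (a * x + 2 * a * c * t)) =
      I * a * B' + c * (A (a * x + 2 * a * c * t) * conj (A (a * x + 2 * a * c * t)) *
        A (a * x + 2 * a * c * t)))
    {q : ℝ → ℝ → ℂ}
    (hq : ∀ x t, q x t =
      A (a * x + 2 * a * c * t) * exp (-I * ((c * x + (c ^ 2 + a ^ 2) * t : ℝ) : ℂ))) :
    I * pdt q x t + pdx (pdx q) x t = I * pdx (fun y s => q y s * conj (q y s) * q y s) x t := by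
  set θ₀ := a * x + 2 * a * c * t
  set e : ℝ → ℝ → ℂ := fun y s => exp (-I * ((c * y + (c ^ 2 + a ^ 2) * s : ℝ) : ℂ))
  have hθx (y : ℝ) : HasDerivAt (fun z => a * z + 2 * a * c * t) a y := by
    simpa using ((hasDerivAt_id y).const_mul a).add_const (2 * a * c * t)
  have hφx (y : ℝ) : HasDerivAt (fun z => c * z + (c ^ 2 + a ^ 2) * t) c y := by
    simpa using ((hasDerivAt_id y).const_mul c).add_const ((c ^ 2 + a ^ 2) * t)
  have hqt : pdt q x t =
      (((2 * a * c : ℝ) : ℂ) * A' θ₀ - I * ((c ^ 2 + a ^ 2 : ℝ) : ℂ) * A θ₀) * e x t := by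
    have hθt : HasDerivAt (fun s => a * x + 2 * a * c * s) (2 * a * c) t := by
      simpa using ((hasDerivAt_id t).const_mul (2 * a * c)).const_add (a * x)
    have hφt : HasDerivAt (fun s => c * x + (c ^ 2 + a ^ 2) * s) (c ^ 2 + a ^ 2) t := by
      simpa using ((hasDerivAt_id t).const_mul (c ^ 2 + a ^ 2)).const_add (c * x)
    simp only [pdt, hq]
    exact (hA.self_of_nhds.mul_cexp_neg_I_mul (θ := fun s => a * x + 2 * a * c * s) hθt hφt).deriv
  have hqx : (fun y => pdx q y t) =ᶠ[𝓝 x]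
      fun y => ((a : ℂ) * A' (a * y + 2 * a * c * t) - I * c * A (a * y + 2 * a * c * t)) *
        e y t := by
    have hθ : Continuous fun y => a * y + 2 * a * c * t := by fun_prop
    filter_upwards [hθ.tendsto x |>.eventually hA] with y hy
    simp only [pdx, hq]
    exact (hy.mul_cexp_neg_I_mul (θ := fun z => a * z + 2 * a * c * t) (hθx y) (hφx y)).deriv
  have hqxx : pdx (pdx q) x t =
      ((a : ℂ) * (a * A'' - I * c * A' θ₀) - I * c * (a * A' θ₀ - I * c * A θ₀)) * e x t := by
    have hA₁ : HasDerivAt (fun θ => (a : ℂ) * A' θ - I * c * A θ) (a * A'' - I * c * A' θ₀) θ₀ :=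
      (hA'.const_mul _).sub (hA.self_of_nhds.const_mul _)
    rw [pdx, hqx.deriv_eq]
    exact (hA₁.mul_cexp_neg_I_mul (θ := fun z => a * z + 2 * a * c * t) (hθx x) (hφx x)).deriv
  have hcube : (fun y => q y t * conj (q y t) * q y t) =
      fun y => A (a * y + 2 * a * c * t) * conj (A (a * y + 2 * a * c * t)) *
        A (a * y + 2 * a * c * t) * e y t := by
    funext y
    have he : e y t * conj (e y t) = 1 := by
      rw [← exp_conj, ← exp_add]
      simp
    rw [hq, map_mul]
    linear_combination A (a * y + 2 * a * c * t) * conj (A (a * y + 2 * a * c * t)) *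
        A (a * y + 2 * a * c * t) * e y t * he
  have hqqq : pdx (fun y s => q y s * conj (q y s) * q y s) x t =
      ((a : ℂ) * B' - I * c * (A θ₀ * conj (A θ₀) * A θ₀)) * e x t := by
    rw [pdx, hcube]
    exact (hB.mul_cexp_neg_I_mul (θ := fun z => a * z + 2 * a * c * t) (hθx x) (hφx x)).deriv
  rw [hqt, hqxx, hqqq]
  push_cast
  linear_combination e x t * hode +
    e x t * (c * (A θ₀ * conj (A θ₀) * A θ₀) - a ^ 2 * A θ₀) * I_sq

noncomputable def trigComb (p r : ℂ) (θ : ℝ) : ℂ := p * Real.cos θ + r * Real.sin θ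

theorem hasDerivAt_trigComb (p r : ℂ) (θ : ℝ) :
    HasDerivAt (trigComb p r) (trigComb r (-p) θ) θ := by
  refine (((Real.hasDerivAt_cos θ).ofReal_comp.const_mul p).add
    ((Real.hasDerivAt_sin θ).ofReal_comp.const_mul r)).congr_deriv ?_
  simp only [trigComb, ofReal_neg]
  ring

theorem continuous_trigComb (p r : ℂ) : Continuous (trigComb p r) := by
  unfold trigComb
  fun_prop

theorem trigComb_neg (p r : ℂ) (θ : ℝ) : trigComb (-p) (-r) θ = -trigComb p r θ := by
  simp only [trigComb]
  ring

theorem conj_trigComb (p r : ℂ) (θ : ℝ) :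
    conj (trigComb p r θ) = trigComb (conj p) (conj r) θ := by
  simp only [trigComb, map_add, map_mul, conj_ofReal]

theorem sin_sq_add_cos_sq_ofReal (θ : ℝ) : (Real.sin θ : ℂ) ^ 2 + (Real.cos θ : ℂ) ^ 2 = 1 := by
  exact_mod_cast Real.sin_sq_add_cos_sq θ

section Soliton

variable (ξ η θ : ℝ)

/- Here `N = trigComb η (I * ξ)`, `M = trigComb η (-(I * ξ))`,
`N' = trigComb (I * ξ) (-η)` and `M' = trigComb (-(I * ξ)) (-η)`. -/

theorem trigComb_mul_trigComb_neg :
    trigComb η (I * ξ) θ * trigComb η (-(I * ξ)) θ =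
      (ξ : ℂ) ^ 2 + ((η : ℂ) ^ 2 - (ξ : ℂ) ^ 2) * (Real.cos θ : ℂ) ^ 2 := by
  simp only [trigComb]
  linear_combination (-(ξ : ℂ) ^ 2 * (Real.sin θ : ℂ) ^ 2) * I_sq +
    (ξ : ℂ) ^ 2 * sin_sq_add_cos_sq_ofReal θ

theorem conj_trigComb_I_mul : conj (trigComb η (I * ξ) θ) = trigComb η (-(I * ξ)) θ := by
  simp [conj_trigComb]

noncomputable def solitonProfile : ℂ :=
  -4 * I * ξ * η * trigComb η (I * ξ) θ / trigComb η (-(I * ξ)) θ ^ 2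

noncomputable def solitonProfileDeriv : ℂ :=
  -4 * I * ξ * η * (trigComb (I * ξ) (-η) θ * trigComb η (-(I * ξ)) θ -
    2 * trigComb η (I * ξ) θ * trigComb (-(I * ξ)) (-η) θ) / trigComb η (-(I * ξ)) θ ^ 3

noncomputable def solitonProfileDeriv2 : ℂ :=
  -4 * I * ξ * η * (trigComb η (I * ξ) θ * trigComb η (-(I * ξ)) θ ^ 2 -
    4 * trigComb η (-(I * ξ)) θ * trigComb (I * ξ) (-η) θ * trigComb (-(I * ξ)) (-η) θ +
    6 * trigComb η (I * ξ) θ * trigComb (-(I * ξ)) (-η) θ ^ 2) / trigComb η (-(I * ξ)) θ ^ 4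

theorem solitonProfile_eq_cube_div_sq :
    solitonProfile ξ η θ = -4 * I * ξ * η * trigComb η (I * ξ) θ ^ 3 /
      ((ξ : ℂ) ^ 2 + ((η : ℂ) ^ 2 - (ξ : ℂ) ^ 2) * (Real.cos θ : ℂ) ^ 2) ^ 2 := by
  have hconj := conj_trigComb_I_mul ξ η θ
  rw [← trigComb_mul_trigComb_neg, solitonProfile]
  rcases eq_or_ne (trigComb η (I * ξ) θ) 0 with hN | hN
  · simp [← hconj, hN]
  · have hM : trigComb η (-(I * ξ)) θ ≠ 0 := by
      rw [← hconj]
      exact (map_ne_zero _).mpr hN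
    field_simp

theorem solitonProfile_mul_conj_mul :
    solitonProfile ξ η θ * conj (solitonProfile ξ η θ) * solitonProfile ξ η θ =
      16 * ξ ^ 2 * η ^ 2 * (-4 * I * ξ * η) / trigComb η (-(I * ξ)) θ ^ 3 := by
  have hconj := conj_trigComb_I_mul ξ η θ
  have hconjA : conj (solitonProfile ξ η θ) =
      4 * I * ξ * η * trigComb η (-(I * ξ)) θ / trigComb η (I * ξ) θ ^ 2 := by
    have hconj' : conj (trigComb η (-(I * ξ)) θ) = trigComb η (I * ξ) θ := by
      rw [← hconj, conj_conj]
    rw [solitonProfile, map_div₀, map_mul, map_pow, hconj, hconj']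
    simp only [map_mul, map_neg, conj_I, conj_ofReal, map_ofNat]
    ring
  rw [hconjA, solitonProfile]
  rcases eq_or_ne (trigComb η (I * ξ) θ) 0 with hN | hN
  · simp [← hconj, hN]
  · have hM : trigComb η (-(I * ξ)) θ ≠ 0 := by
      rw [← hconj]
      exact (map_ne_zero _).mpr hN
    field_simp
    linear_combination 16 * (ξ : ℂ) ^ 3 * η ^ 3 * I_sq

variable {ξ η θ}

theorem hasDerivAt_solitonProfile (hM : trigComb η (-(I * ξ)) θ ≠ 0) :
    HasDerivAt (solitonProfile ξ η) (solitonProfileDeriv ξ η θ) θ := by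
  refine (((hasDerivAt_trigComb _ _ θ).const_mul _).div ((hasDerivAt_trigComb _ _ θ).pow 2)
    (pow_ne_zero 2 hM)).congr_deriv ?_
  simp only [solitonProfileDeriv, Pi.pow_apply]
  field_simp
  ring

theorem hasDerivAt_solitonProfileDeriv (hM : trigComb η (-(I * ξ)) θ ≠ 0) :
    HasDerivAt (solitonProfileDeriv ξ η) (solitonProfileDeriv2 ξ η θ) θ := by
  have hdN := hasDerivAt_trigComb η (I * ξ) θ
  have hdM := hasDerivAt_trigComb η (-(I * ξ)) θ
  have hnum := ((hasDerivAt_trigComb (I * ξ) (-η) θ).mul hdM).sub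
    ((hdN.const_mul 2).mul (hasDerivAt_trigComb (-(I * ξ)) (-η) θ))
  refine ((hnum.const_mul (-4 * I * ξ * η)).div (hdM.pow 3) (pow_ne_zero 3 hM)).congr_deriv ?_
  simp only [solitonProfileDeriv2, Pi.sub_apply, Pi.mul_apply, Pi.pow_apply]
  rw [trigComb_neg η (I * ξ), trigComb_neg η (-(I * ξ))]
  field_simp
  ring

theorem hasDerivAt_solitonProfile_mul_conj_mul (hM : trigComb η (-(I * ξ)) θ ≠ 0) :
    HasDerivAt (fun θ => solitonProfile ξ η θ * conj (solitonProfile ξ η θ) * solitonProfile ξ η θ)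
      (-48 * ξ ^ 2 * η ^ 2 * (-4 * I * ξ * η) * trigComb (-(I * ξ)) (-η) θ /
        trigComb η (-(I * ξ)) θ ^ 4) θ := by
  simp only [solitonProfile_mul_conj_mul]
  refine (((hasDerivAt_trigComb η (-(I * ξ)) θ).pow 3).inv (pow_ne_zero 3 hM) |>.const_mul
    (16 * ξ ^ 2 * η ^ 2 * (-4 * I * ξ * η))).congr_deriv ?_
  simp only [Pi.pow_apply]
  generalize trigComb η (-(I * ξ)) θ = M at *
  field_simp
  ring

theorem solitonProfile_ode (hM : trigComb η (-(I * ξ)) θ ≠ 0) :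
    (4 * ξ * η : ℂ) ^ 2 * (solitonProfileDeriv2 ξ η θ + solitonProfile ξ η θ) =
      I * (4 * ξ * η) * (-48 * ξ ^ 2 * η ^ 2 * (-4 * I * ξ * η) * trigComb (-(I * ξ)) (-η) θ /
        trigComb η (-(I * ξ)) θ ^ 4) +
      2 * (ξ ^ 2 + η ^ 2) *
        (16 * ξ ^ 2 * η ^ 2 * (-4 * I * ξ * η) / trigComb η (-(I * ξ)) θ ^ 3) := by
  have hwronski : trigComb (I * ξ) (-η) θ * trigComb (-(I * ξ)) (-η) θ +
      trigComb η (I * ξ) θ * trigComb η (-(I * ξ)) θ = ξ ^ 2 + η ^ 2 := by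
    simp only [trigComb]
    linear_combination (-(ξ : ℂ) ^ 2 * ((Real.sin θ : ℂ) ^ 2 + (Real.cos θ : ℂ) ^ 2)) * I_sq +
      ((ξ : ℂ) ^ 2 + η ^ 2) * sin_sq_add_cos_sq_ofReal θ
  have hsq : trigComb η (-(I * ξ)) θ ^ 2 + trigComb (-(I * ξ)) (-η) θ ^ 2 = η ^ 2 - ξ ^ 2 := by
    simp only [trigComb]
    linear_combination ((ξ : ℂ) ^ 2 * ((Real.sin θ : ℂ) ^ 2 + (Real.cos θ : ℂ) ^ 2)) * I_sq +
      ((η : ℂ) ^ 2 - ξ ^ 2) * sin_sq_add_cos_sq_ofReal θ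
  have hlin : ((η : ℂ) ^ 2 - ξ ^ 2) * trigComb η (I * ξ) θ =
      (ξ ^ 2 + η ^ 2) * trigComb η (-(I * ξ)) θ - 2 * I * ξ * η * trigComb (-(I * ξ)) (-η) θ := by
    simp only [trigComb]
    linear_combination (-2 * (ξ : ℂ) ^ 2 * η * Real.cos θ) * I_sq
  simp only [solitonProfileDeriv2, solitonProfile]
  generalize trigComb η (I * ξ) θ = N at *
  generalize trigComb η (-(I * ξ)) θ = M at *
  generalize trigComb (I * ξ) (-η) θ = N' at *
  generalize trigComb (-(I * ξ)) (-η) θ = M' at *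
  field_simp
  linear_combination (-16 * (ξ : ℂ) ^ 3 * η ^ 3) * (-4 * M * hwronski + 6 * N * hsq + 6 * hlin)

end Soliton

theorem stmt10_general (ξ η : ℝ)
    (q : ℝ → ℝ → ℂ)
    (hq : ∀ x t : ℝ, q x t =
      -4 * I * (ξ : ℂ) * (η : ℂ) *
          ((η : ℂ) * Real.cos (4*ξ*η*(x + 4*(ξ^2+η^2)*t))
            + I * (ξ : ℂ) * Real.sin (4*ξ*η*(x + 4*(ξ^2+η^2)*t)))^3
        / (((ξ : ℂ)^2 + ((η : ℂ)^2 - (ξ : ℂ)^2) *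
            ((Real.cos (4*ξ*η*(x + 4*(ξ^2+η^2)*t)) : ℂ))^2)^2)
        * Complex.exp (-I * ((2*(ξ^2+η^2)*x + 4*(ξ^4+6*ξ^2*η^2+η^4)*t : ℝ) : ℂ))) :
    ∀ x t : ℝ,
      ξ^2 + (η^2 - ξ^2) * (Real.cos (4*ξ*η*(x + 4*(ξ^2+η^2)*t)))^2 ≠ 0 →
      I * pdt q x t + pdx (pdx q) x t
        = I * pdx (fun y s => (q y s * (starRingEnd ℂ) (q y s)) * q y s) x t := by
  intro x t hP
  have hθ (y s : ℝ) : 4 * ξ * η * y + 2 * (4 * ξ * η) * (2 * (ξ ^ 2 + η ^ 2)) * s =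
      4 * ξ * η * (y + 4 * (ξ ^ 2 + η ^ 2) * s) := by ring
  have hφ (y s : ℝ) : 2 * (ξ ^ 2 + η ^ 2) * y + ((2 * (ξ ^ 2 + η ^ 2)) ^ 2 + (4 * ξ * η) ^ 2) * s =
      2 * (ξ ^ 2 + η ^ 2) * y + 4 * (ξ ^ 4 + 6 * ξ ^ 2 * η ^ 2 + η ^ 4) * s := by ring
  have hM : trigComb η (-(I * ξ)) (4 * ξ * η * (x + 4 * (ξ ^ 2 + η ^ 2) * t)) ≠ 0 := by
    intro hM0
    apply hP
    have := trigComb_mul_trigComb_neg ξ η (4 * ξ * η * (x + 4 * (ξ ^ 2 + η ^ 2) * t))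
    rw [hM0, mul_zero] at this
    exact_mod_cast this.symm
  rw [← hθ] at hM
  refine dnls_of_modulated_wave (a := 4 * ξ * η) (c := 2 * (ξ ^ 2 + η ^ 2)) ?_
    (hasDerivAt_solitonProfileDeriv hM) (hasDerivAt_solitonProfile_mul_conj_mul hM) ?_ ?_
  · filter_upwards [(continuous_trigComb _ _).continuousAt.eventually_ne hM] with θ hθM
      using hasDerivAt_solitonProfile hθM
  · rw [solitonProfile_mul_conj_mul]
    push_cast
    exact solitonProfile_ode hM
  · intro y s
    rw [hq, solitonProfile_eq_cube_div_sq, hθ, hφ]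
    rfl

/-- For real `ξ, η` with `ξη ≠ 0`, the function
`q(x,t) = -4iξη (η cos F + iξ sin F)³ / (ξ² + (η²-ξ²) cos² F)² · e^{-iG}`,
with `F = 4ξη(x + 4(ξ²+η²)t)` and `G = 2(ξ²+η²)x + 4(ξ⁴+6ξ²η²+η⁴)t`, satisfies the DNLS
equation `i q_t + q_xx = i (q q* q)_x` on the open set where `ξ² + (η²-ξ²)cos²F ≠ 0`. -/
theorem stmt10 (ξ η : ℝ) (hξη : ξ * η ≠ 0)
    (q : ℝ → ℝ → ℂ)
    (hq : ∀ x t : ℝ, q x t =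
      -4 * I * (ξ : ℂ) * (η : ℂ) *
          ((η : ℂ) * Real.cos (4*ξ*η*(x + 4*(ξ^2+η^2)*t))
            + I * (ξ : ℂ) * Real.sin (4*ξ*η*(x + 4*(ξ^2+η^2)*t)))^3
        / (((ξ : ℂ)^2 + ((η : ℂ)^2 - (ξ : ℂ)^2) *
            ((Real.cos (4*ξ*η*(x + 4*(ξ^2+η^2)*t)) : ℂ))^2)^2)
        * Complex.exp (-I * ((2*(ξ^2+η^2)*x + 4*(ξ^4+6*ξ^2*η^2+η^4)*t : ℝ) : ℂ))) :
    ∀ x t : ℝ,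
      ξ^2 + (η^2 - ξ^2) * (Real.cos (4*ξ*η*(x + 4*(ξ^2+η^2)*t)))^2 ≠ 0 →
      I * pdt q x t + pdx (pdx q) x t
        = I * pdx (fun y s => (q y s * (starRingEnd ℂ) (q y s)) * q y s) x t :=
  stmt10_general ξ η q hq
end

section
/- Let a, k, λ be real with k ≠ 0, λ ≠ 0, α(x,t) = a(x - (a-k²)t), and q = k e^{iα}. If f(x,t) = μ(x,t) e^{-iα} where μ satisfies μ_x + λk μ² - i(a + 2λ²)μ - λk = 0 and μ_t = (k² - a + 2λ²) μ_x, then f satisfies the Riccati equations f_x + λ q f² - 2iλ² f - λ r = 0 and f_t + λ(i q_x + r q² + 2λ²q) f² - 2iλ²(2λ² + qr) f - λ(qr² + 2λ²r - i r_x) = 0 with r = q* = k e^{-iα}. -/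
open Complex

lemma cexp_lin_hasDerivAt (c₀ c₁ : ℂ) (x : ℝ) :
    HasDerivAt (fun y : ℝ => Complex.exp (c₁ * y + c₀)) (c₁ * Complex.exp (c₁ * x + c₀)) x := by
  have hre : HasDerivAt (fun y : ℝ => ((y : ℝ) : ℂ)) 1 x := by
    simpa using (hasDerivAt_id x).ofReal_comp
  have h := ((hre.const_mul c₁).add_const c₀).cexp
  simpa [mul_comm] using h

/-- With `α(x,t) = a(x - (a-k²)t)`, `q = k e^{iα}` and `r = q* = k e^{-iα}`:
if `f = μ e^{-iα}` where `μ` is smooth and satisfies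
`μ_x + λk μ² - i(a + 2λ²)μ - λk = 0` and `μ_t = (k² - a + 2λ²) μ_x`, then `f` satisfies the
Riccati equations
`f_x + λ q f² - 2iλ² f - λ r = 0` and
`f_t + λ(i q_x + r q² + 2λ²q) f² - 2iλ²(2λ² + qr) f - λ(qr² + 2λ²r - i r_x) = 0`. -/
theorem stmt11 (a k lam : ℝ) (hk : k ≠ 0) (hlam : lam ≠ 0)
    (α : ℝ → ℝ → ℝ) (hα : ∀ x t : ℝ, α x t = a * (x - (a - k^2) * t))
    (q r f μ : ℝ → ℝ → ℂ)
    (hq : ∀ x t : ℝ, q x t = (k : ℂ) * Complex.exp (I * (α x t : ℂ)))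
    (hr : ∀ x t : ℝ, r x t = (k : ℂ) * Complex.exp (-I * (α x t : ℂ)))
    (hμsmooth : ContDiff ℝ (⊤ : ℕ∞) (fun p : ℝ × ℝ => μ p.1 p.2))
    (hμx : ∀ x t : ℝ, pdx μ x t + (lam : ℂ) * (k : ℂ) * (μ x t)^2
      - I * ((a : ℂ) + 2 * (lam : ℂ)^2) * μ x t - (lam : ℂ) * (k : ℂ) = 0)
    (hμt : ∀ x t : ℝ, pdt μ x t = ((k^2 - a + 2*lam^2 : ℝ) : ℂ) * pdx μ x t)
    (hf : ∀ x t : ℝ, f x t = μ x t * Complex.exp (-I * (α x t : ℂ))) :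
    (∀ x t : ℝ,
      pdx f x t + (lam : ℂ) * q x t * (f x t)^2 - 2 * I * (lam : ℂ)^2 * f x t
        - (lam : ℂ) * r x t = 0) ∧
    (∀ x t : ℝ,
      pdt f x t + (lam : ℂ) * (I * pdx q x t + r x t * (q x t)^2
          + 2 * (lam : ℂ)^2 * q x t) * (f x t)^2
        - 2 * I * (lam : ℂ)^2 * (2 * (lam : ℂ)^2 + q x t * r x t) * f x t
        - (lam : ℂ) * (q x t * (r x t)^2 + 2 * (lam : ℂ)^2 * r x t - I * pdx r x t) = 0) := by
  -- derivative of the exponential factor e^{-iα} in x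
  have hEx : ∀ x t : ℝ, HasDerivAt (fun y : ℝ => Complex.exp (-I * ((α y t : ℝ) : ℂ)))
      ((-I * a) * Complex.exp (-I * ((α x t : ℝ) : ℂ))) x := by
    intro x t
    have e : ∀ y : ℝ, -I * ((α y t : ℝ) : ℂ)
        = (-I * a) * (y : ℂ) + (I * a * ((a - k^2) * t : ℝ)) := by
      intro y; rw [hα]; push_cast; ring
    have h := cexp_lin_hasDerivAt (I * a * ((a - k^2) * t : ℝ)) (-I * a) x
    simp only [e]; exact h
  -- derivative of e^{-iα} in t
  have hEt : ∀ x t : ℝ, HasDerivAt (fun s : ℝ => Complex.exp (-I * ((α x s : ℝ) : ℂ)))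
      ((I * a * ((a - k^2 : ℝ) : ℂ)) * Complex.exp (-I * ((α x t : ℝ) : ℂ))) t := by
    intro x t
    have e : ∀ s : ℝ, -I * ((α x s : ℝ) : ℂ)
        = (I * a * ((a - k^2 : ℝ) : ℂ)) * (s : ℂ) + (-I * a * (x : ℝ)) := by
      intro s; rw [hα]; push_cast; ring
    have h := cexp_lin_hasDerivAt (-I * a * (x : ℝ)) (I * a * ((a - k^2 : ℝ) : ℂ)) t
    simp only [e]; exact h
  -- derivative of e^{iα} in x
  have hPx : ∀ x t : ℝ, HasDerivAt (fun y : ℝ => Complex.exp (I * ((α y t : ℝ) : ℂ)))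
      ((I * a) * Complex.exp (I * ((α x t : ℝ) : ℂ))) x := by
    intro x t
    have e : ∀ y : ℝ, I * ((α y t : ℝ) : ℂ)
        = (I * a) * (y : ℂ) + (-I * a * ((a - k^2) * t : ℝ)) := by
      intro y; rw [hα]; push_cast; ring
    have h := cexp_lin_hasDerivAt (-I * a * ((a - k^2) * t : ℝ)) (I * a) x
    simp only [e]; exact h
  -- pdx q and pdx r
  have hqx : ∀ x t : ℝ, pdx q x t = (I * a) * ((k : ℂ) * Complex.exp (I * ((α x t : ℝ) : ℂ))) := by
    intro x t
    have h := (hPx x t).const_mul (k : ℂ)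
    have e : (fun y => q y t) = fun y : ℝ => (k : ℂ) * Complex.exp (I * ((α y t : ℝ) : ℂ)) :=
      funext fun y => hq y t
    rw [pdx, e, h.deriv]; ring
  have hrx : ∀ x t : ℝ, pdx r x t = (-I * a) * ((k : ℂ) * Complex.exp (-I * ((α x t : ℝ) : ℂ))) := by
    intro x t
    have h := (hEx x t).const_mul (k : ℂ)
    have e : (fun y => r y t) = fun y : ℝ => (k : ℂ) * Complex.exp (-I * ((α y t : ℝ) : ℂ)) :=
      funext fun y => hr y t
    rw [pdx, e, h.deriv]; ring
  -- differentiability of the slices of μ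
  have hμd := hμsmooth.differentiable (by simp)
  have hμDx : ∀ x t : ℝ, HasDerivAt (fun y => μ y t) (pdx μ x t) x := by
    intro x t
    have h1 : DifferentiableAt ℝ (fun p : ℝ × ℝ => μ p.1 p.2) (x, t) := hμd.differentiableAt
    have h2 : DifferentiableAt ℝ (fun y : ℝ => μ y t) x :=
      by have := h1.comp x ((differentiableAt_id : DifferentiableAt ℝ (id : ℝ → ℝ) x).prodMk (differentiableAt_const t)); exact this
    exact h2.hasDerivAt
  have hμDt : ∀ x t : ℝ, HasDerivAt (fun s => μ x s) (pdt μ x t) t := by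
    intro x t
    have h1 : DifferentiableAt ℝ (fun p : ℝ × ℝ => μ p.1 p.2) (x, t) := hμd.differentiableAt
    have h2 : DifferentiableAt ℝ (fun s : ℝ => μ x s) t :=
      h1.comp t ((differentiableAt_const x).prodMk differentiableAt_id)
    exact h2.hasDerivAt
  -- pdx f and pdt f
  have hfx : ∀ x t : ℝ, pdx f x t = pdx μ x t * Complex.exp (-I * ((α x t : ℝ) : ℂ))
      + μ x t * ((-I * a) * Complex.exp (-I * ((α x t : ℝ) : ℂ))) := by
    intro x t
    have h := (hμDx x t).mul (hEx x t)
    have e : (fun y => f y t)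
        = fun y : ℝ => μ y t * Complex.exp (-I * ((α y t : ℝ) : ℂ)) := funext fun y => hf y t
    rw [pdx, e]; exact h.deriv
  have hft : ∀ x t : ℝ, pdt f x t = pdt μ x t * Complex.exp (-I * ((α x t : ℝ) : ℂ))
      + μ x t * ((I * a * ((a - k^2 : ℝ) : ℂ)) * Complex.exp (-I * ((α x t : ℝ) : ℂ))) := by
    intro x t
    have h := (hμDt x t).mul (hEt x t)
    have e : (fun s => f x s)
        = fun s : ℝ => μ x s * Complex.exp (-I * ((α x s : ℝ) : ℂ)) := funext fun s => hf x s
    rw [pdt, e]; exact h.deriv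
  have hE : ∀ x t : ℝ, Complex.exp (I * ((α x t : ℝ) : ℂ))
      * Complex.exp (-I * ((α x t : ℝ) : ℂ)) = 1 := by
    intro x t
    rw [← Complex.exp_add]
    norm_num
  constructor
  · intro x t
    rw [hfx, hf, hq, hr]
    linear_combination (Complex.exp (-I * ((α x t : ℝ) : ℂ))) * hμx x t
      + (lam : ℂ) * k * (μ x t)^2 * Complex.exp (-I * ((α x t : ℝ) : ℂ)) * hE x t
  · intro x t
    rw [hft, hμt, hf, hq, hr, hqx, hrx]
    set En := Complex.exp (-I * ((α x t : ℝ) : ℂ)) with hEn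
    set Ep := Complex.exp (I * ((α x t : ℝ) : ℂ)) with hEp
    have hE' : Ep * En = 1 := hE x t
    push_cast
    linear_combination (((k : ℂ)^2 - a + 2 * (lam : ℂ)^2) * En) * hμx x t
      + ((-2) * I * (lam : ℂ)^2 * k^2 * μ x t * En
        + (lam : ℂ) * k * (μ x t)^2 * En * (2 * (lam : ℂ)^2 - a + k^2 * (Ep * En) + k^2)
        - (lam : ℂ) * k^3 * En) * hE'
      + ((k : ℂ) * a * lam * En * (En * (μ x t)^2 * Ep - 1)) * Complex.I_sq
end

section
/- Let A = a + 2λ², D = √(4λ²k² - A²) with 4λ²k² - A² > 0 (a, k, λ real, λk ≠ 0), B = k² - a + 2λ², and c₁, c₂ complex constants not both zero. Then μ(x,t) = (1/(2λk)) (Ai + D (c₁ e^{D(x+Bt)/2} - c₂ e^{-D(x+Bt)/2}) / (c₁ e^{D(x+Bt)/2} + c₂ e^{-D(x+Bt)/2})) satisfies μ_x + λk μ² - i A μ - λk = 0 and μ_t = B μ_x, wherever the denominator is nonzero. -/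
open Complex

/-!
Write `φ = c₁eʷ + c₂e⁻ʷ` and `ψ = c₁eʷ - c₂e⁻ʷ`. Since `φ' = ψ` and `ψ' = φ`, the ratio
`r = ψ/φ` solves `r' = 1 - r²`, so `μ = (Ai + D r(D(x+Bt)/2))/(2λk)` has
`μ_x = D²(1 - r²)/(4λk)`. Substituting into the Riccati equation, the terms in `r`
cancel and what is left is `(A² + D² - 4λ²k²)/(4λk) = 0`. The equation `μ_t = Bμ_x`
only reflects that `μ` is a travelling wave in `x + Bt`.
-/

noncomputable def expRatio (c1 c2 z : ℂ) : ℂ :=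
  (c1 * exp z - c2 * exp (-z)) / (c1 * exp z + c2 * exp (-z))

theorem hasDerivAt_expRatio {c1 c2 z : ℂ} (h : c1 * exp z + c2 * exp (-z) ≠ 0) :
    HasDerivAt (expRatio c1 c2) (1 - expRatio c1 c2 z ^ 2) z := by
  have hexp := hasDerivAt_exp z
  have hexp_neg : HasDerivAt (fun w => exp (-w)) (-exp (-z)) z := by
    simpa using (hasDerivAt_neg z).cexp
  have hquot : HasDerivAt (expRatio c1 c2) _ z :=
    ((hexp.const_mul c1).sub (hexp_neg.const_mul c2)).div
      ((hexp.const_mul c1).add (hexp_neg.const_mul c2)) h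
  convert hquot using 1
  simp only [expRatio, Pi.sub_apply]
  field_simp
  ring

theorem hasDerivAt_expRatio_half_mul {c1 c2 : ℂ} {D s : ℝ}
    (h : c1 * exp ((D * s / 2 : ℝ) : ℂ) + c2 * exp (-((D * s / 2 : ℝ) : ℂ)) ≠ 0) :
    HasDerivAt (fun s : ℝ => expRatio c1 c2 ((D * s / 2 : ℝ) : ℂ))
      ((1 - expRatio c1 c2 ((D * s / 2 : ℝ) : ℂ) ^ 2) * (D / 2)) s := by
  have hlin : HasDerivAt (fun s : ℝ => ((D * s / 2 : ℝ) : ℂ)) (D / 2) s := by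
    simpa using (((hasDerivAt_id s).const_mul D).div_const 2).ofReal_comp
  exact (hasDerivAt_expRatio h).comp s hlin

theorem pdx_travelingWave {f : ℝ → ℂ} {f' : ℂ} {B x t : ℝ} (hf : HasDerivAt f f' (x + B * t)) :
    pdx (fun x t => f (x + B * t)) x t = f' :=
  (hf.comp_add_const x (B * t)).deriv

theorem pdt_travelingWave {f : ℝ → ℂ} {f' : ℂ} {B x t : ℝ} (hf : HasDerivAt f f' (x + B * t)) :
    pdt (fun x t => f (x + B * t)) x t = B * f' := by
  have hwave : HasDerivAt (fun s : ℝ => x + B * s) B t := by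
    simpa using ((hasDerivAt_id t).const_mul B).const_add x
  exact (hf.scomp t hwave).deriv

theorem riccati_of_ratio {lam k A D : ℂ} (hlk : lam * k ≠ 0) (hD : D ^ 2 = 4 * lam ^ 2 * k ^ 2 - A ^ 2)
    (r : ℂ) :
    1 / (2 * lam * k) * (D * ((1 - r ^ 2) * (D / 2)))
      + lam * k * (1 / (2 * lam * k) * (A * I + D * r)) ^ 2
      - I * A * (1 / (2 * lam * k) * (A * I + D * r)) - lam * k = 0 := by
  have hl : lam ≠ 0 := left_ne_zero_of_mul hlk
  have hk : k ≠ 0 := right_ne_zero_of_mul hlk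
  field_simp
  linear_combination hD - A ^ 2 * I_sq

theorem stmt13_general (k lam A B D : ℝ) (hlk : lam * k ≠ 0)
    (hpos : 4 * lam^2 * k^2 - A^2 > 0)
    (hD : D = Real.sqrt (4 * lam^2 * k^2 - A^2))
    (c1 c2 : ℂ)
    (μ : ℝ → ℝ → ℂ)
    (hμ : ∀ x t : ℝ, μ x t = (1 / (2 * (lam : ℂ) * (k : ℂ))) *
      ((A : ℂ) * I + (D : ℂ) *
        (c1 * Complex.exp (((D * (x + B * t) / 2 : ℝ) : ℂ))
          - c2 * Complex.exp (-((D * (x + B * t) / 2 : ℝ) : ℂ))) /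
        (c1 * Complex.exp (((D * (x + B * t) / 2 : ℝ) : ℂ))
          + c2 * Complex.exp (-((D * (x + B * t) / 2 : ℝ) : ℂ))))) :
    ∀ x t : ℝ,
      (c1 * Complex.exp (((D * (x + B * t) / 2 : ℝ) : ℂ))
        + c2 * Complex.exp (-((D * (x + B * t) / 2 : ℝ) : ℂ)) ≠ 0) →
      (pdx μ x t + (lam : ℂ) * (k : ℂ) * (μ x t)^2 - I * (A : ℂ) * μ x t
          - (lam : ℂ) * (k : ℂ) = 0) ∧
      pdt μ x t = (B : ℂ) * pdx μ x t := by
  intro x t hden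
  have hμ_wave : μ = fun x t => 1 / (2 * (lam : ℂ) * k) *
      (A * I + D * expRatio c1 c2 ((D * (x + B * t) / 2 : ℝ) : ℂ)) := by
    funext x t
    rw [hμ, expRatio, mul_div_assoc]
  have hprofile := (((hasDerivAt_expRatio_half_mul hden).const_mul (D : ℂ)).const_add
    ((A : ℂ) * I)).const_mul (1 / (2 * (lam : ℂ) * k))
  have hD2 : (D : ℂ) ^ 2 = 4 * (lam : ℂ) ^ 2 * k ^ 2 - A ^ 2 := by
    rw [hD]
    exact_mod_cast Real.sq_sqrt hpos.le
  subst hμ_wave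
  rw [pdx_travelingWave hprofile, pdt_travelingWave hprofile]
  exact ⟨riccati_of_ratio (by exact_mod_cast hlk) hD2 _, rfl⟩

/-- With `A = a + 2λ²`, `B = k² - a + 2λ²`, `D = √(4λ²k² - A²) > 0` (`a, k, λ` real,
`λk ≠ 0`) and `c₁, c₂` complex constants not both zero, the function
`μ(x,t) = (1/(2λk)) (Ai + D (c₁ e^{D(x+Bt)/2} - c₂ e^{-D(x+Bt)/2})/(c₁ e^{D(x+Bt)/2} + c₂ e^{-D(x+Bt)/2}))`
satisfies `μ_x + λk μ² - iAμ - λk = 0` and `μ_t = B μ_x` wherever the denominator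
is nonzero. -/
theorem stmt13 (a k lam A B D : ℝ) (hlk : lam * k ≠ 0)
    (hA : A = a + 2 * lam^2) (hpos : 4 * lam^2 * k^2 - A^2 > 0)
    (hD : D = Real.sqrt (4 * lam^2 * k^2 - A^2))
    (hB : B = k^2 - a + 2 * lam^2)
    (c1 c2 : ℂ) (hc : ¬(c1 = 0 ∧ c2 = 0))
    (μ : ℝ → ℝ → ℂ)
    (hμ : ∀ x t : ℝ, μ x t = (1 / (2 * (lam : ℂ) * (k : ℂ))) *
      ((A : ℂ) * I + (D : ℂ) *
        (c1 * Complex.exp (((D * (x + B * t) / 2 : ℝ) : ℂ))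
          - c2 * Complex.exp (-((D * (x + B * t) / 2 : ℝ) : ℂ))) /
        (c1 * Complex.exp (((D * (x + B * t) / 2 : ℝ) : ℂ))
          + c2 * Complex.exp (-((D * (x + B * t) / 2 : ℝ) : ℂ))))) :
    ∀ x t : ℝ,
      (c1 * Complex.exp (((D * (x + B * t) / 2 : ℝ) : ℂ))
        + c2 * Complex.exp (-((D * (x + B * t) / 2 : ℝ) : ℂ)) ≠ 0) →
      (pdx μ x t + (lam : ℂ) * (k : ℂ) * (μ x t)^2 - I * (A : ℂ) * μ x t
          - (lam : ℂ) * (k : ℂ) = 0) ∧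
      pdt μ x t = (B : ℂ) * pdx μ x t :=
  stmt13_general k lam A B D hlk hpos hD c1 c2 μ hμ
end
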